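/- arXiv:2601.05681 — 2 statements merged into one kernel-verified Lean document; each statement's English description precedes it below -/
import Mathlib

section
/- Symmetric half-neighbourhood correctness: Let points in ℝ² be assigned to grid cells of width d̄ > 0 as above. Define for each cell (i,j) the forward neighbourhood F(i,j) = {(i,j), (i,j+1), (i+1,j−1), (i+1,j), (i+1,j+1)}. Then for any two points p ≠ q with ‖p − q‖ < d̄ lying in cells c(p), c(q), either c(q) ∈ F(c(p)) or c(p) ∈ F(c(q)). -/
noncomputable def eDist (p q : ℝ × ℝ) : ℝ :=
  Real.sqrt ((p.1 - q.1) ^ 2 + (p.2 - q.2) ^ 2)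

/-- Cell index of a point for grid width `d`. -/
noncomputable def cell (d : ℝ) (r : ℝ × ℝ) : ℤ × ℤ := (⌊r.1 / d⌋, ⌊r.2 / d⌋)

/-- Forward neighbourhood of a cell: itself, right, and the three below. -/
def fwd (c : ℤ × ℤ) : Set (ℤ × ℤ) :=
  {c, (c.1, c.2 + 1), (c.1 + 1, c.2 - 1), (c.1 + 1, c.2), (c.1 + 1, c.2 + 1)}

namespace Int

section LinearOrderedRing

variable {α : Type*} [Ring α] [LinearOrder α] [IsStrictOrderedRing α] [FloorRing α]

theorem floor_sub_floor_le_one {a b : α} (h : a - b < 1) : ⌊a⌋ - ⌊b⌋ ≤ 1 := by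
  have : ⌊a⌋ ≤ ⌊b⌋ + 1 := by
    rw [← floor_add_one]
    exact floor_le_floor (sub_lt_iff_lt_add'.1 h).le
  omega

theorem abs_floor_sub_floor_le_one {a b : α} (h : |a - b| < 1) : |⌊a⌋ - ⌊b⌋| ≤ 1 := by
  obtain ⟨hab, hba⟩ := abs_sub_lt_iff.1 h
  exact abs_sub_le_iff.2 ⟨floor_sub_floor_le_one hab, floor_sub_floor_le_one hba⟩

end LinearOrderedRing

theorem abs_floor_div_sub_floor_div_le_one {α : Type*} [Field α] [LinearOrder α]
    [IsStrictOrderedRing α] [FloorRing α] {x y d : α} (hd : 0 < d) (h : |x - y| < d) :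
    |⌊x / d⌋ - ⌊y / d⌋| ≤ 1 :=
  abs_floor_sub_floor_le_one <| by rwa [← sub_div, abs_div, abs_of_pos hd, div_lt_one hd]

end Int

theorem abs_fst_sub_le_eDist (p q : ℝ × ℝ) : |p.1 - q.1| ≤ eDist p q :=
  Real.abs_le_sqrt (le_add_of_nonneg_right (sq_nonneg _))

theorem abs_snd_sub_le_eDist (p q : ℝ × ℝ) : |p.2 - q.2| ≤ eDist p q :=
  Real.abs_le_sqrt (le_add_of_nonneg_left (sq_nonneg _))

theorem abs_cell_sub_le_one {d : ℝ} (hd : 0 < d) {p q : ℝ × ℝ} (hclose : eDist p q < d) :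
    |(cell d p).1 - (cell d q).1| ≤ 1 ∧ |(cell d p).2 - (cell d q).2| ≤ 1 :=
  ⟨Int.abs_floor_div_sub_floor_div_le_one hd ((abs_fst_sub_le_eDist p q).trans_lt hclose),
    Int.abs_floor_div_sub_floor_div_le_one hd ((abs_snd_sub_le_eDist p q).trans_lt hclose)⟩

/- The five cells of `fwd c` and their reflections through `c` cover the 3 × 3 block around `c`. -/
theorem mem_fwd_or_mem_fwd {c c' : ℤ × ℤ} (h₁ : |c.1 - c'.1| ≤ 1) (h₂ : |c.2 - c'.2| ≤ 1) :
    c' ∈ fwd c ∨ c ∈ fwd c' := by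
  rw [abs_le] at h₁ h₂
  simp only [fwd, Set.mem_insert_iff, Set.mem_singleton_iff, Prod.ext_iff]
  omega

theorem half_neighbourhood_correct_general (d : ℝ) (hd : 0 < d) (p q : ℝ × ℝ)
    (hclose : eDist p q < d) :
    cell d q ∈ fwd (cell d p) ∨ cell d p ∈ fwd (cell d q) := by
  obtain ⟨h₁, h₂⟩ := abs_cell_sub_le_one hd hclose
  exact mem_fwd_or_mem_fwd h₁ h₂

theorem half_neighbourhood_correct (d : ℝ) (hd : 0 < d) (p q : ℝ × ℝ)
    (hp : 0 ≤ p.1 ∧ 0 ≤ p.2) (hq : 0 ≤ q.1 ∧ 0 ≤ q.2) (hne : p ≠ q)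
    (hclose : eDist p q < d) :
    cell d q ∈ fwd (cell d p) ∨ cell d p ∈ fwd (cell d q) :=
  half_neighbourhood_correct_general d hd p q hclose
end

section
/- Linear expected comparison count: Let the unit square be partitioned into M² measurable cells each of area at most c/n, with M ≤ C√n for constants c, C > 0. Let P₁,…,Pₙ be i.i.d. uniform points and N_{i,j} the number of points in cell (i,j). Then E[ Σ_{i,j} N_{i,j}·(N_{i,j} − 1)/2 + Σ over adjacent cell pairs ((i,j),(α,β)) of N_{i,j}·N_{α,β} ] ≤ K·n for a constant K depending only on c and C, where each cell has at most 8 adjacent cells. -/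
open MeasureTheory ProbabilityTheory
open scoped Classical

section Aux

variable {Ω : Type} [MeasureSpace Ω] [IsProbabilityMeasure (ℙ : Measure Ω)]

lemma lin_exp_pair_eq_indicator (X Y : Ω → ℝ × ℝ) (A B : Set (ℝ × ℝ)) (ω : Ω) :
    (if X ω ∈ A then (1:ℝ) else 0) * (if Y ω ∈ B then (1:ℝ) else 0)
      = (X ⁻¹' A ∩ Y ⁻¹' B).indicator (fun _ => (1:ℝ)) ω := by
  by_cases h1 : X ω ∈ A <;> by_cases h2 : Y ω ∈ B <;>
    simp [Set.indicator_apply, Set.mem_inter_iff, Set.mem_preimage, h1, h2]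

lemma lin_exp_integrable_pair (X Y : Ω → ℝ × ℝ) (hX : Measurable X) (hY : Measurable Y)
    (A B : Set (ℝ × ℝ)) (hA : MeasurableSet A) (hB : MeasurableSet B) :
    Integrable (fun ω => (if X ω ∈ A then (1:ℝ) else 0) * (if Y ω ∈ B then (1:ℝ) else 0)) ℙ := by
  simp_rw [lin_exp_pair_eq_indicator]
  exact (integrable_const (1:ℝ)).indicator ((hX hA).inter (hY hB))

lemma lin_exp_integral_pair (X Y : Ω → ℝ × ℝ) (hX : Measurable X) (hY : Measurable Y)
    (A B : Set (ℝ × ℝ)) (hA : MeasurableSet A) (hB : MeasurableSet B) :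
    ∫ ω, (if X ω ∈ A then (1:ℝ) else 0) * (if Y ω ∈ B then (1:ℝ) else 0) ∂ℙ
      = (ℙ (X ⁻¹' A ∩ Y ⁻¹' B)).toReal := by
  simp_rw [lin_exp_pair_eq_indicator]
  rw [integral_indicator_const (1:ℝ) ((hX hA).inter (hY hB))]
  simp
  rfl

end Aux

lemma lin_exp_count {M : ℕ} (i : Fin M) (x : ℝ) (hx : 0 ≤ x) :
    ∑ α : Fin M, (if |((i:ℕ):ℤ) - ((α:ℕ):ℤ)| ≤ 1 then x else 0) ≤ 3 * x := by
  rw [← Finset.sum_filter, Finset.sum_const, nsmul_eq_mul]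
  have hcard : (Finset.univ.filter (fun α : Fin M => |((i:ℕ):ℤ) - ((α:ℕ):ℤ)| ≤ 1)).card ≤ 3 := by
    have h := Finset.card_le_card_of_injOn (fun α : Fin M => ((α:ℕ):ℤ))
      (s := Finset.univ.filter (fun α : Fin M => |((i:ℕ):ℤ) - ((α:ℕ):ℤ)| ≤ 1))
      (t := Finset.Icc (((i:ℕ):ℤ) - 1) (((i:ℕ):ℤ) + 1))
      (by
        intro a ha
        have ha' : |((i:ℕ):ℤ) - ((a:ℕ):ℤ)| ≤ 1 := (Finset.mem_filter.mp ha).2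
        rw [abs_le] at ha'
        simp only [Finset.coe_Icc, Set.mem_Icc]
        omega)
      (by
        intro a _ b _ hab
        have hab' : ((a:ℕ):ℤ) = ((b:ℕ):ℤ) := hab
        exact Fin.val_injective (by exact_mod_cast hab'))
    have h3 : (Finset.Icc (((i:ℕ):ℤ) - 1) (((i:ℕ):ℤ) + 1)).card = 3 := by
      rw [Int.card_Icc]; omega
    omega
  calc ((Finset.univ.filter (fun α : Fin M => |((i:ℕ):ℤ) - ((α:ℕ):ℤ)| ≤ 1)).card : ℝ) * x
      ≤ 3 * x := by
        have : ((Finset.univ.filter (fun α : Fin M => |((i:ℕ):ℤ) - ((α:ℕ):ℤ)| ≤ 1)).card : ℝ) ≤ 3 := by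
          exact_mod_cast hcard
        exact mul_le_mul_of_nonneg_right this hx

theorem linear_expected_comparisons (c C : ℝ) (hc : 0 < c) (hC : 0 < C) :
    ∃ K : ℝ, ∀ (Ω : Type) [MeasureSpace Ω] [IsProbabilityMeasure (ℙ : Measure Ω)]
      (n M : ℕ) (P : Fin n → Ω → ℝ × ℝ), (∀ k, Measurable (P k)) →
      iIndepFun P ℙ →
      (∀ k, Measure.map (P k) ℙ =
        (volume : Measure (ℝ × ℝ)).restrict (Set.Icc (0 : ℝ) 1 ×ˢ Set.Icc (0 : ℝ) 1)) →
      ∀ (G : Fin M → Fin M → Set (ℝ × ℝ)), (∀ i j, MeasurableSet (G i j)) →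
      (∀ i j, G i j ⊆ Set.Icc (0 : ℝ) 1 ×ˢ Set.Icc (0 : ℝ) 1) →
      (∀ i j α β, (i, j) ≠ (α, β) → Disjoint (G i j) (G α β)) →
      (∀ i j, (volume (G i j)).toReal ≤ c / n) →
      (M : ℝ) ≤ C * Real.sqrt n →
      ∫ ω, ((∑ i, ∑ j, (∑ k, if P k ω ∈ G i j then (1 : ℝ) else 0) *
              ((∑ k, if P k ω ∈ G i j then (1 : ℝ) else 0) - 1) / 2) +
            ∑ i : Fin M, ∑ j : Fin M, ∑ α : Fin M, ∑ β : Fin M,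
              if |((i : ℕ) : ℤ) - ((α : ℕ) : ℤ)| ≤ 1 ∧ |((j : ℕ) : ℤ) - ((β : ℕ) : ℤ)| ≤ 1 ∧ (i, j) ≠ (α, β) then
                (∑ k, if P k ω ∈ G i j then (1 : ℝ) else 0) *
                (∑ k, if P k ω ∈ G α β then (1 : ℝ) else 0)
              else 0) ∂ℙ ≤ K * n := by
  refine ⟨C^2 * ((c + c^2)/2 + 9 * c^2), ?_⟩
  intro Ω _ _ n M P hPm hPind hPmap G hGm hGsub hGdisj hGvol hM
  have hcn : (0:ℝ) ≤ c / n := div_nonneg hc.le (Nat.cast_nonneg n)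
  -- probability of landing in a measurable subset of the unit square
  have hprob : ∀ (k : Fin n) (A : Set (ℝ × ℝ)), MeasurableSet A →
      A ⊆ Set.Icc (0 : ℝ) 1 ×ˢ Set.Icc (0 : ℝ) 1 → ℙ (P k ⁻¹' A) = volume A := by
    intro k A hA hAsub
    have h1 : ℙ (P k ⁻¹' A) = Measure.map (P k) ℙ A := (Measure.map_apply (hPm k) hA).symm
    rw [h1, hPmap k, Measure.restrict_apply hA, Set.inter_eq_left.mpr hAsub]
  have hcellp : ∀ (i j : Fin M) (k : Fin n), (ℙ (P k ⁻¹' G i j)).toReal ≤ c / n := by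
    intro i j k
    rw [hprob k _ (hGm i j) (hGsub i j)]
    exact hGvol i j
  -- the counting functions
  set N : Fin M → Fin M → Ω → ℝ :=
    fun i j ω => ∑ k, if P k ω ∈ G i j then (1:ℝ) else 0 with hN
  have hint_pair : ∀ (k l : Fin n) (i j α β : Fin M),
      Integrable (fun ω => (if P k ω ∈ G i j then (1:ℝ) else 0) *
        (if P l ω ∈ G α β then (1:ℝ) else 0)) ℙ :=
    fun k l i j α β => lin_exp_integrable_pair _ _ (hPm k) (hPm l) _ _ (hGm i j) (hGm α β)
  have hN_nonneg : ∀ i j ω, 0 ≤ N i j ω := by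
    intro i j ω
    apply Finset.sum_nonneg
    intro k _
    split_ifs <;> norm_num
  have hN_int : ∀ i j, Integrable (N i j) ℙ := by
    intro i j
    apply integrable_finset_sum
    intro k _
    have : (fun ω => if P k ω ∈ G i j then (1:ℝ) else 0)
        = (P k ⁻¹' G i j).indicator (fun _ => (1:ℝ)) := by
      funext ω; by_cases h : P k ω ∈ G i j <;> simp [Set.indicator_apply, h]
    rw [this]
    exact (integrable_const (1:ℝ)).indicator ((hPm k) (hGm i j))
  have hprod_expand : ∀ (i j α β : Fin M) (ω : Ω), N i j ω * N α β ω
      = ∑ k, ∑ l, (if P k ω ∈ G i j then (1:ℝ) else 0) * (if P l ω ∈ G α β then (1:ℝ) else 0) :=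
    fun i j α β ω => Finset.sum_mul_sum _ _ _ _
  have hprod_int : ∀ i j α β : Fin M, Integrable (fun ω => N i j ω * N α β ω) ℙ := by
    intro i j α β
    have : (fun ω => N i j ω * N α β ω) = fun ω => ∑ k, ∑ l,
        (if P k ω ∈ G i j then (1:ℝ) else 0) * (if P l ω ∈ G α β then (1:ℝ) else 0) :=
      funext (hprod_expand i j α β)
    rw [this]
    exact integrable_finset_sum _ (fun k _ => integrable_finset_sum _ (fun l _ => hint_pair k l i j α β))
  have hprod_integral : ∀ i j α β : Fin M, ∫ ω, N i j ω * N α β ω ∂ℙ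
      = ∑ k, ∑ l, ∫ ω, (if P k ω ∈ G i j then (1:ℝ) else 0) *
          (if P l ω ∈ G α β then (1:ℝ) else 0) ∂ℙ := by
    intro i j α β
    have e : (fun ω => N i j ω * N α β ω) = fun ω => ∑ k, ∑ l,
        (if P k ω ∈ G i j then (1:ℝ) else 0) * (if P l ω ∈ G α β then (1:ℝ) else 0) :=
      funext (hprod_expand i j α β)
    rw [e, integral_finset_sum _ (fun k _ => integrable_finset_sum _ (fun l _ => hint_pair k l i j α β))]
    exact Finset.sum_congr rfl (fun k _ =>
      integral_finset_sum _ (fun l _ => hint_pair k l i j α β))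
  -- off-diagonal pair bound
  have hpair_ne : ∀ (k l : Fin n) (i j α β : Fin M), k ≠ l →
      ∫ ω, (if P k ω ∈ G i j then (1:ℝ) else 0) * (if P l ω ∈ G α β then (1:ℝ) else 0) ∂ℙ
        ≤ (c/n) * (c/n) := by
    intro k l i j α β hkl
    rw [lin_exp_integral_pair _ _ (hPm k) (hPm l) _ _ (hGm i j) (hGm α β)]
    rw [(hPind.indepFun hkl).measure_inter_preimage_eq_mul _ _ (hGm i j) (hGm α β)]
    rw [ENNReal.toReal_mul]
    exact mul_le_mul (hcellp i j k) (hcellp α β l) ENNReal.toReal_nonneg hcn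
  -- diagonal, same cell
  have hpair_diag : ∀ (k : Fin n) (i j : Fin M),
      ∫ ω, (if P k ω ∈ G i j then (1:ℝ) else 0) * (if P k ω ∈ G i j then (1:ℝ) else 0) ∂ℙ
        ≤ c/n := by
    intro k i j
    rw [lin_exp_integral_pair _ _ (hPm k) (hPm k) _ _ (hGm i j) (hGm i j), Set.inter_self]
    exact hcellp i j k
  -- diagonal, disjoint cells
  have hpair_diag0 : ∀ (k : Fin n) (i j α β : Fin M), (i, j) ≠ (α, β) →
      ∫ ω, (if P k ω ∈ G i j then (1:ℝ) else 0) * (if P k ω ∈ G α β then (1:ℝ) else 0) ∂ℙ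
        ≤ (c/n) * (c/n) := by
    intro k i j α β hne
    rw [lin_exp_integral_pair _ _ (hPm k) (hPm k) _ _ (hGm i j) (hGm α β)]
    have he : P k ⁻¹' G i j ∩ P k ⁻¹' G α β = ∅ := by
      rw [← Set.preimage_inter, Set.disjoint_iff_inter_eq_empty.mp (hGdisj i j α β hne)]
      exact Set.preimage_empty
    rw [he]
    simpa using mul_nonneg hcn hcn
  have hnc : (n:ℝ) * (c/n) ≤ c := by
    rcases Nat.eq_zero_or_pos n with h | h
    · simp [h, hc.le]
    · have : (n:ℝ) ≠ 0 := by positivity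
      rw [mul_div_cancel₀ _ this]
  have hnc0 : 0 ≤ (n:ℝ) * (c/n) := mul_nonneg (Nat.cast_nonneg n) hcn
  -- bound for products over distinct cells
  have hSS_ne : ∀ i j α β : Fin M, (i, j) ≠ (α, β) →
      ∫ ω, N i j ω * N α β ω ∂ℙ ≤ c^2 := by
    intro i j α β hne
    rw [hprod_integral i j α β]
    calc (∑ k : Fin n, ∑ l : Fin n, ∫ ω, (if P k ω ∈ G i j then (1:ℝ) else 0) *
            (if P l ω ∈ G α β then (1:ℝ) else 0) ∂ℙ)
        ≤ ∑ _k : Fin n, ∑ _l : Fin n, (c/n) * (c/n) := by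
          refine Finset.sum_le_sum (fun k _ => Finset.sum_le_sum (fun l _ => ?_))
          by_cases hkl : k = l
          · subst hkl; exact hpair_diag0 k i j α β hne
          · exact hpair_ne k l i j α β hkl
      _ = ((n:ℝ) * (c/n)) * ((n:ℝ) * (c/n)) := by
          simp [Finset.sum_const, Finset.card_univ, nsmul_eq_mul]; ring
      _ ≤ c * c := mul_le_mul hnc hnc hnc0 hc.le
      _ = c^2 := by ring
  -- bound for the square
  have hSS_self : ∀ i j : Fin M, ∫ ω, N i j ω * N i j ω ∂ℙ ≤ c + c^2 := by
    intro i j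
    rw [hprod_integral i j i j]
    calc (∑ k : Fin n, ∑ l : Fin n, ∫ ω, (if P k ω ∈ G i j then (1:ℝ) else 0) *
            (if P l ω ∈ G i j then (1:ℝ) else 0) ∂ℙ)
        ≤ ∑ k : Fin n, ∑ l : Fin n, ((if k = l then (c/n) else 0) + (c/n) * (c/n)) := by
          refine Finset.sum_le_sum (fun k _ => Finset.sum_le_sum (fun l _ => ?_))
          by_cases hkl : k = l
          · subst hkl
            rw [if_pos rfl]
            have h1 := hpair_diag k i j
            have h0 := mul_nonneg hcn hcn
            linarith
          · simp only [if_neg hkl, zero_add]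
            exact hpair_ne k l i j i j hkl
      _ = (n:ℝ) * (c/n) + ((n:ℝ) * (c/n)) * ((n:ℝ) * (c/n)) := by
          simp only [Finset.sum_add_distrib, Finset.sum_const, Finset.card_univ,
            Fintype.card_fin, nsmul_eq_mul, Finset.sum_ite_eq, Finset.mem_univ, if_pos]
          ring
      _ ≤ c + c * c := by
          have := mul_le_mul hnc hnc hnc0 hc.le
          linarith
      _ = c + c^2 := by ring
  have hSS_nonneg : ∀ i j α β : Fin M, 0 ≤ ∫ ω, N i j ω * N α β ω ∂ℙ := by
    intro i j α β
    exact integral_nonneg (fun ω => mul_nonneg (hN_nonneg i j ω) (hN_nonneg α β ω))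
  -- integrability of both sides
  have hterm1_int : ∀ i j : Fin M, Integrable (fun ω => N i j ω * (N i j ω - 1) / 2) ℙ := by
    intro i j
    have e : (fun ω => N i j ω * (N i j ω - 1) / 2)
        = fun ω => (N i j ω * N i j ω - N i j ω) / 2 := by
      funext ω; ring
    rw [e]
    exact (((hprod_int i j i j).sub (hN_int i j)).div_const 2)
  have hterm1half_int : ∀ i j : Fin M, Integrable (fun ω => N i j ω * N i j ω / 2) ℙ :=
    fun i j => (hprod_int i j i j).div_const 2
  have hterm2_int : ∀ i j α β : Fin M, Integrable (fun ω =>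
      if |((i : ℕ) : ℤ) - ((α : ℕ) : ℤ)| ≤ 1 ∧ |((j : ℕ) : ℤ) - ((β : ℕ) : ℤ)| ≤ 1 ∧ (i, j) ≠ (α, β) then
        N i j ω * N α β ω else 0) ℙ := by
    intro i j α β
    by_cases h : |((i : ℕ) : ℤ) - ((α : ℕ) : ℤ)| ≤ 1 ∧ |((j : ℕ) : ℤ) - ((β : ℕ) : ℤ)| ≤ 1 ∧ (i, j) ≠ (α, β)
    · simpa [h] using hprod_int i j α β
    · simp only [h, if_false]
      exact integrable_const 0
  have hsum2_int : Integrable (fun ω => ∑ i : Fin M, ∑ j : Fin M, ∑ α : Fin M, ∑ β : Fin M,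
      if |((i : ℕ) : ℤ) - ((α : ℕ) : ℤ)| ≤ 1 ∧ |((j : ℕ) : ℤ) - ((β : ℕ) : ℤ)| ≤ 1 ∧ (i, j) ≠ (α, β) then
        N i j ω * N α β ω else 0) ℙ :=
    integrable_finset_sum _ (fun i _ => integrable_finset_sum _ (fun j _ =>
      integrable_finset_sum _ (fun α _ => integrable_finset_sum _ (fun β _ => hterm2_int i j α β))))
  -- the two integrands
  have hF_int : Integrable (fun ω =>
      (∑ i : Fin M, ∑ j : Fin M, N i j ω * (N i j ω - 1) / 2) +
      ∑ i : Fin M, ∑ j : Fin M, ∑ α : Fin M, ∑ β : Fin M,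
        if |((i : ℕ) : ℤ) - ((α : ℕ) : ℤ)| ≤ 1 ∧ |((j : ℕ) : ℤ) - ((β : ℕ) : ℤ)| ≤ 1 ∧ (i, j) ≠ (α, β) then
          N i j ω * N α β ω else 0) ℙ :=
    (integrable_finset_sum _ (fun i _ => integrable_finset_sum _ (fun j _ => hterm1_int i j))).add hsum2_int
  have hG_int : Integrable (fun ω =>
      (∑ i : Fin M, ∑ j : Fin M, N i j ω * N i j ω / 2) +
      ∑ i : Fin M, ∑ j : Fin M, ∑ α : Fin M, ∑ β : Fin M,
        if |((i : ℕ) : ℤ) - ((α : ℕ) : ℤ)| ≤ 1 ∧ |((j : ℕ) : ℤ) - ((β : ℕ) : ℤ)| ≤ 1 ∧ (i, j) ≠ (α, β) then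
          N i j ω * N α β ω else 0) ℙ :=
    (integrable_finset_sum _ (fun i _ => integrable_finset_sum _ (fun j _ => hterm1half_int i j))).add hsum2_int
  -- goal restated using N
  show ∫ ω, ((∑ i : Fin M, ∑ j : Fin M, N i j ω * (N i j ω - 1) / 2) +
      ∑ i : Fin M, ∑ j : Fin M, ∑ α : Fin M, ∑ β : Fin M,
        if |((i : ℕ) : ℤ) - ((α : ℕ) : ℤ)| ≤ 1 ∧ |((j : ℕ) : ℤ) - ((β : ℕ) : ℤ)| ≤ 1 ∧ (i, j) ≠ (α, β) then
          N i j ω * N α β ω else 0) ∂ℙ ≤ C^2 * ((c + c^2)/2 + 9 * c^2) * n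
  have hmono : ∫ ω, ((∑ i : Fin M, ∑ j : Fin M, N i j ω * (N i j ω - 1) / 2) +
      ∑ i : Fin M, ∑ j : Fin M, ∑ α : Fin M, ∑ β : Fin M,
        if |((i : ℕ) : ℤ) - ((α : ℕ) : ℤ)| ≤ 1 ∧ |((j : ℕ) : ℤ) - ((β : ℕ) : ℤ)| ≤ 1 ∧ (i, j) ≠ (α, β) then
          N i j ω * N α β ω else 0) ∂ℙ
      ≤ ∫ ω, ((∑ i : Fin M, ∑ j : Fin M, N i j ω * N i j ω / 2) +
      ∑ i : Fin M, ∑ j : Fin M, ∑ α : Fin M, ∑ β : Fin M,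
        if |((i : ℕ) : ℤ) - ((α : ℕ) : ℤ)| ≤ 1 ∧ |((j : ℕ) : ℤ) - ((β : ℕ) : ℤ)| ≤ 1 ∧ (i, j) ≠ (α, β) then
          N i j ω * N α β ω else 0) ∂ℙ := by
    refine integral_mono hF_int hG_int ?_
    intro ω
    simp only
    refine add_le_add ?_ le_rfl
    refine Finset.sum_le_sum (fun i _ => Finset.sum_le_sum (fun j _ => ?_))
    nlinarith [hN_nonneg i j ω]
  refine le_trans hmono ?_
  -- compute the integral of the majorant
  have eq1 : ∫ ω, (∑ i : Fin M, ∑ j : Fin M, N i j ω * N i j ω / 2) ∂ℙ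
      = ∑ i : Fin M, ∑ j : Fin M, ∫ ω, N i j ω * N i j ω / 2 ∂ℙ := by
    rw [integral_finset_sum _ (fun i _ => integrable_finset_sum _ (fun j _ => hterm1half_int i j))]
    exact Finset.sum_congr rfl (fun i _ => integral_finset_sum _ (fun j _ => hterm1half_int i j))
  have eq2 : ∫ ω, (∑ i : Fin M, ∑ j : Fin M, ∑ α : Fin M, ∑ β : Fin M,
      if |((i : ℕ) : ℤ) - ((α : ℕ) : ℤ)| ≤ 1 ∧ |((j : ℕ) : ℤ) - ((β : ℕ) : ℤ)| ≤ 1 ∧ (i, j) ≠ (α, β) then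
        N i j ω * N α β ω else 0) ∂ℙ
      = ∑ i : Fin M, ∑ j : Fin M, ∑ α : Fin M, ∑ β : Fin M,
        (if |((i : ℕ) : ℤ) - ((α : ℕ) : ℤ)| ≤ 1 ∧ |((j : ℕ) : ℤ) - ((β : ℕ) : ℤ)| ≤ 1 ∧ (i, j) ≠ (α, β) then
          ∫ ω, N i j ω * N α β ω ∂ℙ else 0) := by
    rw [integral_finset_sum _ (fun i _ => integrable_finset_sum _ (fun j _ =>
      integrable_finset_sum _ (fun α _ => integrable_finset_sum _ (fun β _ => hterm2_int i j α β))))]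
    refine Finset.sum_congr rfl (fun i _ => ?_)
    rw [integral_finset_sum _ (fun j _ =>
      integrable_finset_sum _ (fun α _ => integrable_finset_sum _ (fun β _ => hterm2_int i j α β)))]
    refine Finset.sum_congr rfl (fun j _ => ?_)
    rw [integral_finset_sum _ (fun α _ => integrable_finset_sum _ (fun β _ => hterm2_int i j α β))]
    refine Finset.sum_congr rfl (fun α _ => ?_)
    rw [integral_finset_sum _ (fun β _ => hterm2_int i j α β)]
    refine Finset.sum_congr rfl (fun β _ => ?_)
    by_cases h : |((i : ℕ) : ℤ) - ((α : ℕ) : ℤ)| ≤ 1 ∧ |((j : ℕ) : ℤ) - ((β : ℕ) : ℤ)| ≤ 1 ∧ (i, j) ≠ (α, β)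
    · simp only [if_pos h]
    · simp only [if_neg h, integral_zero]
  rw [integral_add (integrable_finset_sum _ (fun i _ =>
      integrable_finset_sum _ (fun j _ => hterm1half_int i j))) hsum2_int, eq1, eq2]
  -- bound the first part
  have hc2 : (0:ℝ) ≤ c^2 := sq_nonneg c
  have b1 : ∑ i : Fin M, ∑ j : Fin M, ∫ ω, N i j ω * N i j ω / 2 ∂ℙ
      ≤ (M:ℝ) * (M:ℝ) * ((c + c^2)/2) := by
    calc ∑ i : Fin M, ∑ j : Fin M, ∫ ω, N i j ω * N i j ω / 2 ∂ℙ
        ≤ ∑ _i : Fin M, ∑ _j : Fin M, (c + c^2)/2 := by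
          refine Finset.sum_le_sum (fun i _ => Finset.sum_le_sum (fun j _ => ?_))
          rw [integral_div]
          have := hSS_self i j
          linarith
      _ = (M:ℝ) * (M:ℝ) * ((c + c^2)/2) := by
          simp [Finset.sum_const, Finset.card_univ, nsmul_eq_mul]; ring
  -- bound the second part via counting
  have b2 : (∑ i : Fin M, ∑ j : Fin M, ∑ α : Fin M, ∑ β : Fin M,
      (if |((i : ℕ) : ℤ) - ((α : ℕ) : ℤ)| ≤ 1 ∧ |((j : ℕ) : ℤ) - ((β : ℕ) : ℤ)| ≤ 1 ∧ (i, j) ≠ (α, β) then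
        ∫ ω, N i j ω * N α β ω ∂ℙ else 0))
      ≤ (M:ℝ) * (M:ℝ) * (9 * c^2) := by
    have inner : ∀ i j : Fin M, (∑ α : Fin M, ∑ β : Fin M,
        (if |((i : ℕ) : ℤ) - ((α : ℕ) : ℤ)| ≤ 1 ∧ |((j : ℕ) : ℤ) - ((β : ℕ) : ℤ)| ≤ 1 ∧ (i, j) ≠ (α, β) then
          ∫ ω, N i j ω * N α β ω ∂ℙ else 0)) ≤ 9 * c^2 := by
      intro i j
      have step : ∀ α β : Fin M,
          (if |((i : ℕ) : ℤ) - ((α : ℕ) : ℤ)| ≤ 1 ∧ |((j : ℕ) : ℤ) - ((β : ℕ) : ℤ)| ≤ 1 ∧ (i, j) ≠ (α, β) then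
            ∫ ω, N i j ω * N α β ω ∂ℙ else 0)
          ≤ (if |((i : ℕ) : ℤ) - ((α : ℕ) : ℤ)| ≤ 1 then
              (if |((j : ℕ) : ℤ) - ((β : ℕ) : ℤ)| ≤ 1 then c^2 else 0) else 0) := by
        intro α β
        by_cases h : |((i : ℕ) : ℤ) - ((α : ℕ) : ℤ)| ≤ 1 ∧ |((j : ℕ) : ℤ) - ((β : ℕ) : ℤ)| ≤ 1 ∧ (i, j) ≠ (α, β)
        · rw [if_pos h, if_pos h.1, if_pos h.2.1]
          exact hSS_ne i j α β h.2.2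
        · rw [if_neg h]
          split_ifs <;> simp [hc2]
      calc (∑ α : Fin M, ∑ β : Fin M,
          (if |((i : ℕ) : ℤ) - ((α : ℕ) : ℤ)| ≤ 1 ∧ |((j : ℕ) : ℤ) - ((β : ℕ) : ℤ)| ≤ 1 ∧ (i, j) ≠ (α, β) then
            ∫ ω, N i j ω * N α β ω ∂ℙ else 0))
          ≤ ∑ α : Fin M, ∑ β : Fin M,
            (if |((i : ℕ) : ℤ) - ((α : ℕ) : ℤ)| ≤ 1 then
              (if |((j : ℕ) : ℤ) - ((β : ℕ) : ℤ)| ≤ 1 then c^2 else 0) else 0) :=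
            Finset.sum_le_sum (fun α _ => Finset.sum_le_sum (fun β _ => step α β))
        _ = ∑ α : Fin M, (if |((i : ℕ) : ℤ) - ((α : ℕ) : ℤ)| ≤ 1 then
              (∑ β : Fin M, if |((j : ℕ) : ℤ) - ((β : ℕ) : ℤ)| ≤ 1 then c^2 else 0) else 0) := by
            refine Finset.sum_congr rfl (fun α _ => ?_)
            by_cases h : |((i : ℕ) : ℤ) - ((α : ℕ) : ℤ)| ≤ 1 <;> simp [h]
        _ ≤ ∑ α : Fin M, (if |((i : ℕ) : ℤ) - ((α : ℕ) : ℤ)| ≤ 1 then 3 * c^2 else 0) := by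
            refine Finset.sum_le_sum (fun α _ => ?_)
            split_ifs with h
            · exact lin_exp_count j (c^2) hc2
            · exact le_rfl
        _ ≤ 3 * (3 * c^2) := lin_exp_count i (3 * c^2) (by positivity)
        _ = 9 * c^2 := by ring
    calc (∑ i : Fin M, ∑ j : Fin M, ∑ α : Fin M, ∑ β : Fin M,
        (if |((i : ℕ) : ℤ) - ((α : ℕ) : ℤ)| ≤ 1 ∧ |((j : ℕ) : ℤ) - ((β : ℕ) : ℤ)| ≤ 1 ∧ (i, j) ≠ (α, β) then
          ∫ ω, N i j ω * N α β ω ∂ℙ else 0))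
        ≤ ∑ _i : Fin M, ∑ _j : Fin M, 9 * c^2 :=
          Finset.sum_le_sum (fun i _ => Finset.sum_le_sum (fun j _ => inner i j))
      _ = (M:ℝ) * (M:ℝ) * (9 * c^2) := by
          simp [Finset.sum_const, Finset.card_univ, nsmul_eq_mul]; ring
  -- conclude
  have hM2 : (M:ℝ) * (M:ℝ) ≤ C^2 * n := by
    have hM0 : (0:ℝ) ≤ (M:ℝ) := Nat.cast_nonneg M
    have hs : Real.sqrt (n:ℝ) * Real.sqrt (n:ℝ) = (n:ℝ) :=
      Real.mul_self_sqrt (Nat.cast_nonneg n)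
    nlinarith [Real.sqrt_nonneg (n:ℝ)]
  have hconst : (0:ℝ) ≤ (c + c^2)/2 + 9 * c^2 := by positivity
  calc (∑ i : Fin M, ∑ j : Fin M, ∫ ω, N i j ω * N i j ω / 2 ∂ℙ) +
      (∑ i : Fin M, ∑ j : Fin M, ∑ α : Fin M, ∑ β : Fin M,
        (if |((i : ℕ) : ℤ) - ((α : ℕ) : ℤ)| ≤ 1 ∧ |((j : ℕ) : ℤ) - ((β : ℕ) : ℤ)| ≤ 1 ∧ (i, j) ≠ (α, β) then
          ∫ ω, N i j ω * N α β ω ∂ℙ else 0))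
      ≤ (M:ℝ) * (M:ℝ) * ((c + c^2)/2) + (M:ℝ) * (M:ℝ) * (9 * c^2) := add_le_add b1 b2
    _ = (M:ℝ) * (M:ℝ) * ((c + c^2)/2 + 9 * c^2) := by ring
    _ ≤ C^2 * n * ((c + c^2)/2 + 9 * c^2) := mul_le_mul_of_nonneg_right hM2 hconst
    _ = C^2 * ((c + c^2)/2 + 9 * c^2) * n := by ring
end
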